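/- Let X be a k-regular loopless graph on n vertices with least adjacency eigenvalue τ, and let S be an independent set with |S| = n·(−τ)/(k − τ) (equality in the Delsarte–Hoffman bound). Then every vertex not in S has exactly −τ neighbours in S, and every vertex in S has k neighbours outside S; i.e., the partition {S, V∖S} is equitable. -/

import Mathlib

open Matrix Finset

/-!
Since `τ` is the least eigenvalue, `B = A - τ I` is positive semidefinite, and the all-ones
vector `𝟙` is an eigenvector of `B` for `k - τ`. For the characteristic vector `χ` of `S` and
`u = n χ - |S| 𝟙` one finds `uᵀ B u = n |S| (-τ n - (k - τ) |S|)`, which vanishes exactly at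
equality in the Hoffman bound. Hence `B u = 0`, so `B χ` is constant, equal to `-τ`; outside `S`
its entries count neighbours in `S`.
-/

namespace Matrix

variable {ι : Type*} [Fintype ι]

theorem IsSymm.posSemidef_sub_smul_one [DecidableEq ι] {A : Matrix ι ι ℝ} (hA : A.IsSymm)
    {τ : ℝ} (hτ : ∀ (μ : ℝ) (v : ι → ℝ), v ≠ 0 → A *ᵥ v = μ • v → τ ≤ μ) :
    (A - τ • 1).PosSemidef := by
  have hB : (A - τ • (1 : Matrix ι ι ℝ)).IsHermitian :=
    isHermitian_iff_isSymm.mpr (hA.sub (isSymm_one.smul τ))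
  refine hB.posSemidef_iff_eigenvalues_nonneg.mpr fun i => ?_
  have hv : ⇑(hB.eigenvectorBasis i) ≠ 0 := fun h =>
    hB.eigenvectorBasis.orthonormal.ne_zero i (by ext j; simpa using congrFun h j)
  have hAv : A *ᵥ hB.eigenvectorBasis i = (hB.eigenvalues i + τ) • hB.eigenvectorBasis i := by
    have := hB.mulVec_eigenvectorBasis i
    rw [sub_mulVec, smul_mulVec, one_mulVec] at this
    rw [add_smul, ← this, sub_add_cancel]
  simpa using hτ _ _ hv hAv

/-- Equality case of `n • xᵀ B x ≥ c (∑ i, x i)²`; test `B` on `n • x - (∑ i, x i) • 1`. -/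
theorem PosSemidef.card_smul_mulVec_eq {B : Matrix ι ι ℝ} (hB : B.PosSemidef) {c : ℝ}
    (hB1 : B *ᵥ 1 = c • 1) {x : ι → ℝ}
    (hx : Fintype.card ι * (x ⬝ᵥ B *ᵥ x) = c * (∑ i, x i) ^ 2) :
    (Fintype.card ι : ℝ) • B *ᵥ x = (c * ∑ i, x i) • 1 := by
  set n : ℝ := (Fintype.card ι : ℝ)
  set σ := ∑ i, x i
  have h1B : (1 : ι → ℝ) ⬝ᵥ B *ᵥ x = c * σ := by
    rw [dotProduct_mulVec, ← mulVec_transpose, ← conjTranspose_eq_transpose_of_trivial,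
      hB.isHermitian.eq, hB1, smul_dotProduct, one_dotProduct, smul_eq_mul]
  have hBu : B *ᵥ (n • x - σ • 1) = n • B *ᵥ x - (σ * c) • 1 := by
    rw [mulVec_sub, mulVec_smul, mulVec_smul, hB1, smul_smul]
  have hquad : star (n • x - σ • 1) ⬝ᵥ B *ᵥ (n • x - σ • 1) = 0 := by
    rw [star_trivial, hBu, dotProduct_sub, sub_dotProduct, sub_dotProduct]
    simp only [smul_dotProduct, dotProduct_smul, h1B, one_dotProduct_one, smul_eq_mul]
    rw [dotProduct_one]
    linear_combination n * hx
  rw [(hB.dotProduct_mulVec_zero_iff _).mp hquad, eq_comm, sub_eq_zero] at hBu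
  rw [hBu, mul_comm]

theorem mulVec_one_eq_smul_of_sum_row {A : Matrix ι ι ℝ} {k : ℝ} (hA : ∀ i, ∑ j, A i j = k) :
    A *ᵥ 1 = k • 1 := by
  ext i
  simp [mulVec, dotProduct, hA]

theorem indicator_one_dotProduct (S : Finset ι) (v : ι → ℝ) :
    (S : Set ι).indicator 1 ⬝ᵥ v = ∑ i ∈ S, v i :=
  (sum_indicator_subset_of_eq_zero 1 (fun i a => a * v i) (subset_univ S)
    fun _ => zero_mul _).trans (by simp)

theorem mulVec_indicator_one_apply (A : Matrix ι ι ℝ) (S : Finset ι) (i : ι) :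
    (A *ᵥ (S : Set ι).indicator 1) i = ∑ j ∈ S, A i j :=
  (sum_indicator_subset_of_eq_zero 1 (fun j a => A i j * a) (subset_univ S)
    fun _ => mul_zero _).trans (by simp)

omit [Fintype ι] in
theorem sum_apply_eq_zero_of_mem {A : Matrix ι ι ℝ} {S : Finset ι} (hA : ∀ i, A i i = 0)
    (hS : ∀ i ∈ S, ∀ j ∈ S, i ≠ j → A i j = 0) {i : ι} (hi : i ∈ S) : ∑ j ∈ S, A i j = 0 :=
  sum_eq_zero fun j hj => (eq_or_ne i j).elim (fun h => h ▸ hA i) (hS i hi j hj)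

end Matrix

theorem stmt8_general (n k : ℕ)
    (A : Matrix (Fin n) (Fin n) ℝ) (hsym : A.IsSymm)
    (hloop : ∀ i, A i i = 0)
    (hreg : ∀ i, ∑ j, A i j = k)
    (τ : ℝ) (hτneg : τ < 0)
    (hτmin : ∀ (μ : ℝ) (v : Fin n → ℝ), v ≠ 0 → A.mulVec v = μ • v → τ ≤ μ)
    (S : Finset (Fin n)) (hind : ∀ i ∈ S, ∀ j ∈ S, i ≠ j → A i j = 0)
    (heq : (S.card : ℝ) = n * (-τ) / ((k : ℝ) - τ)) :
    (∀ i ∉ S, ∑ j ∈ S, A i j = -τ) ∧ (∀ i ∈ S, ∑ j ∈ Sᶜ, A i j = k) := by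
  have hS : ∀ i ∈ S, ∑ j ∈ S, A i j = 0 := fun i hi => sum_apply_eq_zero_of_mem hloop hind hi
  refine ⟨fun i hi => ?_, fun i hi => ?_⟩
  · set χ : Fin n → ℝ := (S : Set (Fin n)).indicator 1
    have hcard : ((k : ℝ) - τ) * S.card = -τ * n := by
      rw [heq, mul_div_cancel₀ _ (sub_pos.2 (hτneg.trans_le k.cast_nonneg)).ne']
      ring
    have hB1 : (A - τ • 1) *ᵥ 1 = ((k : ℝ) - τ) • 1 := by
      rw [sub_mulVec, smul_mulVec, one_mulVec, mulVec_one_eq_smul_of_sum_row hreg, sub_smul]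
    have hχBχ : χ ⬝ᵥ (A - τ • 1) *ᵥ χ = -τ * S.card := by
      rw [sub_mulVec, smul_mulVec, one_mulVec, dotProduct_sub, dotProduct_smul,
        indicator_one_dotProduct, indicator_one_dotProduct]
      simp [χ, mulVec_indicator_one_apply, sum_eq_zero hS,
        sum_indicator_subset (1 : Fin n → ℝ) (subset_refl S)]
    have hχsum : ∑ j, χ j = S.card := by
      simpa [dotProduct_one] using indicator_one_dotProduct S 1
    have h := congrFun ((hsym.posSemidef_sub_smul_one hτmin).card_smul_mulVec_eq hB1
      (x := χ) (by rw [hχBχ, hχsum, Fintype.card_fin]; linear_combination -(S.card : ℝ) * hcard)) i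
    rw [sub_mulVec, smul_mulVec, one_mulVec, hχsum, hcard] at h
    simp only [Pi.smul_apply, Pi.sub_apply, Pi.one_apply, smul_eq_mul, mulVec_indicator_one_apply,
      χ, Set.indicator_of_notMem (mem_coe.not.2 hi), mul_zero, sub_zero, mul_one,
      Fintype.card_fin] at h
    have hn : (n : ℝ) ≠ 0 := mod_cast i.pos.ne'
    exact mul_left_cancel₀ hn (h.trans (by ring))
  · linarith [sum_compl_add_sum S (A i), hreg i, hS i hi]

/-- Equality in the Delsarte–Hoffman bound: every vertex outside `S` has exactly `−τ`
neighbours in `S`, and every vertex in `S` has `k` neighbours outside `S`;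
the partition `{S, V∖S}` is equitable. -/
theorem stmt8 (n k : ℕ) (hn : 0 < n)
    (A : Matrix (Fin n) (Fin n) ℝ) (hsym : A.IsSymm)
    (h01 : ∀ i j, A i j = 0 ∨ A i j = 1) (hloop : ∀ i, A i i = 0)
    (hreg : ∀ i, ∑ j, A i j = k)
    (τ : ℝ) (hτneg : τ < 0)
    (hτeig : ∃ v : Fin n → ℝ, v ≠ 0 ∧ A.mulVec v = τ • v)
    (hτmin : ∀ (μ : ℝ) (v : Fin n → ℝ), v ≠ 0 → A.mulVec v = μ • v → τ ≤ μ)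
    (S : Finset (Fin n)) (hind : ∀ i ∈ S, ∀ j ∈ S, i ≠ j → A i j = 0)
    (heq : (S.card : ℝ) = n * (-τ) / ((k : ℝ) - τ)) :
    (∀ i ∉ S, ∑ j ∈ S, A i j = -τ) ∧ (∀ i ∈ S, ∑ j ∈ Sᶜ, A i j = k) :=
  stmt8_general n k A hsym hloop hreg τ hτneg hτmin S hind heq
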